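/- Consider the closing-equation system −4p − (2/3)q + (2/3)pq + 2p² − (5/6)q² = −4r − (2/3)s + (2/3)rs + 2r² − (5/6)s², −4p − (2/3)q − (2/3)pq − 2p² − (1/4)q² = −4r − (2/3)s − (2/3)rs − 2r² − (1/4)s², p² + q² = 1, r² + s² = 1, with (p,q) ≠ (r,s). The set of unordered pairs {(p,q),(r,s)} arising from its solutions has exactly two elements, and one of them is { (−1/√37, 6/√37), (1/√37, −6/√37) }; in particular there is a second solution pair disjoint from this one. -/

import Mathlib

/-- The closing-equation system for
`X = (-2/3 + 2x/3 - 5y/3, 4 - 4x - 2y/3)` and `Y = (-2/3 - 2x/3 - y/2, 4 + 4x + 2y/3)`. -/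
def closingSys13 (p q r s : ℝ) : Prop :=
  -4 * p - (2 / 3) * q + (2 / 3) * p * q + 2 * p ^ 2 - (5 / 6) * q ^ 2 =
      -4 * r - (2 / 3) * s + (2 / 3) * r * s + 2 * r ^ 2 - (5 / 6) * s ^ 2 ∧
    -4 * p - (2 / 3) * q - (2 / 3) * p * q - 2 * p ^ 2 - (1 / 4) * q ^ 2 =
      -4 * r - (2 / 3) * s - (2 / 3) * r * s - 2 * r ^ 2 - (1 / 4) * s ^ 2 ∧
    p ^ 2 + q ^ 2 = 1 ∧ r ^ 2 + s ^ 2 = 1 ∧ (p, q) ≠ (r, s)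

/-- The set of unordered pairs `{(p,q), (r,s)}` arising from solutions of the closing
equations. -/
def pairSet13 : Set (Set (ℝ × ℝ)) :=
  {t | ∃ p q r s : ℝ, closingSys13 p q r s ∧ t = {(p, q), (r, s)}}

/-- The first intersection pair. -/
noncomputable def pair13 : Set (ℝ × ℝ) :=
  {(-1 / Real.sqrt 37, 6 / Real.sqrt 37), (1 / Real.sqrt 37, -6 / Real.sqrt 37)}

/-!
The two sides of the closing equations are `H₁` and `H₂` at the points `c + d` and `c - d`, where
`c` is the midpoint and `d` the half-chord. For a quadratic `H`, `H (c + d) - H (c - d) = 2 ∇H(c) · d`,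
so the system says that `d ≠ 0` is orthogonal to `∇H₁(c)`, `∇H₂(c)` and `c`, and that
`|c|² + |d|² = 1`. Hence these three vectors are parallel, which puts `c` on two conics; inside the
unit disk they meet only at `0` and at `c₀ = ((41 - √3281) / 26, (3√3281 - 173) / 13)`.
For `c = 0` we get `d = ±(-1, 6) / √37`. For `c = c₀`, `d` is one of the two vectors orthogonal to
`c₀` of length `√(1 - |c₀|²)`, and both choices give the same unordered pair, whose points have
first coordinate below `-1/6`, unlike `±1/√37`.
-/

open Real

namespace ClosingSys13

lemma det_eq_zero_of_orthogonal {R : Type*} [CommRing R] [NoZeroDivisors R] {a b c d u v : R}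
    (h₁ : a * u + b * v = 0) (h₂ : c * u + d * v = 0) (huv : (u, v) ≠ 0) :
    a * d - b * c = 0 := by
  by_contra hD
  refine huv (Prod.ext ?_ ?_)
  · exact (mul_eq_zero.mp (by linear_combination d * h₁ - b * h₂ :
      (a * d - b * c) * u = 0)).resolve_left hD
  · exact (mul_eq_zero.mp (by linear_combination a * h₂ - c * h₁ :
      (a * d - b * c) * v = 0)).resolve_left hD

lemma eq_or_eq_neg_of_orthogonal {x y u v t : ℝ} (hc : (x, y) ≠ 0) (horth : x * u + y * v = 0)
    (hlen : t ^ 2 * (x ^ 2 + y ^ 2) = u ^ 2 + v ^ 2) :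
    (u, v) = (-(t * y), t * x) ∨ (u, v) = -(-(t * y), t * x) := by
  have hN : x ^ 2 + y ^ 2 ≠ 0 := by
    contrapose! hc
    have hx : x = 0 := by nlinarith [sq_nonneg x, sq_nonneg y]
    have hy : y = 0 := by nlinarith [sq_nonneg x, sq_nonneg y]
    simp [hx, hy]
  set μ := (x * v - y * u) / (x ^ 2 + y ^ 2)
  have hu : u = -(μ * y) := by
    simp only [μ]; field_simp; linear_combination x * horth
  have hv : v = μ * x := by
    simp only [μ]; field_simp; linear_combination y * horth
  have hμ : μ ^ 2 = t ^ 2 := by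
    refine mul_right_cancel₀ hN ?_
    rw [hlen, hu, hv]; ring
  rcases sq_eq_sq_iff_eq_or_eq_neg.mp hμ with hμt | hμt
  · left; rw [hu, hv, hμt]
  · right; rw [hu, hv, hμt]; ext <;> simp

def chord {E : Type*} [AddCommGroup E] (c d : E) : Set E := {c + d, c - d}

lemma chord_neg {E : Type*} [AddCommGroup E] (c d : E) : chord c (-d) = chord c d := by
  simp only [chord, ← sub_eq_add_neg, sub_neg_eq_add, Set.pair_comm]

lemma chord_eq_of_eq_or_eq_neg {E : Type*} [AddCommGroup E] {c d d' : E} (hd : d = d' ∨ d = -d') :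
    chord c d = chord c d' := by
  rcases hd with rfl | rfl
  · rfl
  · exact chord_neg c d'

/-- The first two equations are `3 ∇H₁(x, y) · (u, v) = 0` and `-6 ∇H₂(x, y) · (u, v) = 0`. -/
def ChordSys (x y u v : ℝ) : Prop :=
  (12 * x + 2 * y - 12) * u + (2 * x - 5 * y - 2) * v = 0 ∧
    (24 * x + 4 * y + 24) * u + (4 * x + 3 * y + 4) * v = 0 ∧
    x * u + y * v = 0 ∧ x ^ 2 + y ^ 2 + u ^ 2 + v ^ 2 = 1 ∧ (u, v) ≠ 0

lemma closingSys13_add_sub_iff (x y u v : ℝ) :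
    closingSys13 (x + u) (y + v) (x - u) (y - v) ↔ ChordSys x y u v := by
  have hne : (x + u, y + v) = (x - u, y - v) ↔ (u, v) = 0 := by
    simp only [Prod.ext_iff, Prod.fst_zero, Prod.snd_zero]
    constructor <;> rintro ⟨h₁, h₂⟩ <;> constructor <;> linarith
  rw [closingSys13, ChordSys, ne_eq, ne_eq, hne]
  constructor
  · rintro ⟨h₁, h₂, c₁, c₂, hd⟩
    exact ⟨by linear_combination (3 / 2) * h₁, by linear_combination (-3) * h₂,
      by linear_combination (c₁ - c₂) / 4, by linear_combination (c₁ + c₂) / 2, hd⟩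
  · rintro ⟨g₁, g₂, ho, hn, hd⟩
    exact ⟨by linear_combination (2 / 3) * g₁, by linear_combination (-1 / 3) * g₂,
      by linear_combination hn + 2 * ho, by linear_combination hn - 2 * ho, hd⟩

lemma pairSet13_eq_setOf_chordSys :
    pairSet13 = {t | ∃ x y u v, ChordSys x y u v ∧ t = chord (x, y) (u, v)} := by
  ext t
  constructor
  · rintro ⟨p, q, r, s, h, rfl⟩
    refine ⟨(p + r) / 2, (q + s) / 2, (p - r) / 2, (q - s) / 2, ?_, ?_⟩
    · rw [← closingSys13_add_sub_iff]
      convert h using 2 <;> ring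
    · simp only [chord, Prod.mk_add_mk, Prod.mk_sub_mk]
      congr! 3 <;> ring
  · rintro ⟨x, y, u, v, h, rfl⟩
    exact ⟨_, _, _, _, (closingSys13_add_sub_iff x y u v).mpr h, rfl⟩

/-- `(x, y)` is parallel to both `∇H₁(x, y)` and `∇H₂(x, y)`. -/
def IsCenter (x y : ℝ) : Prop :=
  2 * x ^ 2 - 17 * x * y - 2 * y ^ 2 - 2 * x + 12 * y = 0 ∧
    4 * x ^ 2 - 21 * x * y - 4 * y ^ 2 + 4 * x - 24 * y = 0

lemma ChordSys.isCenter {x y u v : ℝ} (h : ChordSys x y u v) : IsCenter x y := by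
  obtain ⟨g₁, g₂, ho, -, hd⟩ := h
  exact ⟨by linear_combination -det_eq_zero_of_orthogonal g₁ ho hd,
    by linear_combination -det_eq_zero_of_orthogonal g₂ ho hd⟩

noncomputable def x₀ : ℝ := (41 - √3281) / 26

noncomputable def y₀ : ℝ := (3 * √3281 - 173) / 13

lemma sq_sqrt_3281 : √3281 ^ 2 = 3281 := sq_sqrt (by norm_num)

lemma lt_sqrt_3281 : (57 : ℝ) < √3281 := by
  rw [lt_sqrt (by norm_num)]; norm_num

lemma sqrt_3281_lt : √3281 < 573 / 10 := by
  rw [sqrt_lt' (by norm_num)]; norm_num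

lemma isCenter_x₀_y₀ : IsCenter x₀ y₀ := by
  have hw := sq_sqrt_3281
  exact ⟨by unfold x₀ y₀; linear_combination (8 / 169) * hw,
    by unfold x₀ y₀; linear_combination (-7 / 338) * hw⟩

lemma IsCenter.eq_zero_or_eq {x y : ℝ} (h : IsCenter x y) (hy : y ^ 2 ≤ 1) :
    (x = 0 ∧ y = 0) ∨ (x = x₀ ∧ y = y₀) := by
  obtain ⟨h₁, h₂⟩ := h
  have hw := sq_sqrt_3281
  -- `2 h₁ + h₂` splits into two lines through the origin; each meets the hyperbola `h₂ - 2 h₁`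
  -- in one further point, which lies in the disk only for the first line.
  have hhyp : 13 * x * y + 8 * x - 48 * y = 0 := by linear_combination h₂ - 2 * h₁
  have hlines : (16 * x - (55 + √3281) * y) * (16 * x - (55 - √3281) * y) = 0 := by
    linear_combination 32 * (2 * h₁ + h₂) - y ^ 2 * hw
  rcases mul_eq_zero.mp hlines with hl | hl
  · have hy' : y * (13 * (55 + √3281) * y + 8 * √3281 - 328) = 0 := by
      linear_combination 16 * hhyp - (13 * y + 8) * hl
    rcases mul_eq_zero.mp hy' with rfl | hy'
    · left; exact ⟨by linarith, rfl⟩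
    right
    have hy₀ : (55 + √3281) * (13 * y - (3 * √3281 - 173)) = 0 := by
      linear_combination hy' - 3 * hw
    have hy₀ : 13 * y - (3 * √3281 - 173) = 0 :=
      (mul_eq_zero.mp hy₀).resolve_left (by positivity)
    exact ⟨by unfold x₀; linear_combination hl / 16 + (55 + √3281) / 208 * hy₀ + 3 / 208 * hw,
      by unfold y₀; linear_combination hy₀ / 13⟩
  · have hy' : y * (13 * (55 - √3281) * y - 8 * √3281 - 328) = 0 := by
      linear_combination 16 * hhyp - (13 * y + 8) * hl
    rcases mul_eq_zero.mp hy' with rfl | hy'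
    · left; exact ⟨by linarith, rfl⟩
    exfalso
    have := lt_sqrt_3281
    have := sqrt_3281_lt
    nlinarith

lemma x₀_bounds : -627 / 1000 < x₀ ∧ x₀ < -3 / 5 := by
  have := lt_sqrt_3281
  have := sqrt_3281_lt
  constructor <;> unfold x₀ <;> linarith

lemma y₀_bounds : -2 / 13 < y₀ ∧ y₀ < 0 := by
  have := lt_sqrt_3281
  have := sqrt_3281_lt
  constructor <;> unfold y₀ <;> linarith

lemma normSq_x₀_y₀_bounds : 1 / 5 < x₀ ^ 2 + y₀ ^ 2 ∧ x₀ ^ 2 + y₀ ^ 2 < 1 := by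
  obtain ⟨hx₁, hx₂⟩ := x₀_bounds
  obtain ⟨hy₁, hy₂⟩ := y₀_bounds
  constructor <;> nlinarith

/-- `|d| / |c₀|` for the chord of the unit circle with midpoint `c₀`. -/
noncomputable def t₀ : ℝ := √((1 - (x₀ ^ 2 + y₀ ^ 2)) / (x₀ ^ 2 + y₀ ^ 2))

lemma t₀_sq_mul : t₀ ^ 2 * (x₀ ^ 2 + y₀ ^ 2) = 1 - (x₀ ^ 2 + y₀ ^ 2) := by
  obtain ⟨h₁, h₂⟩ := normSq_x₀_y₀_bounds
  rw [t₀, sq_sqrt (div_nonneg (by linarith) (by linarith)), div_mul_cancel₀ _ (by positivity)]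

lemma t₀_pos : 0 < t₀ := by
  obtain ⟨h₁, h₂⟩ := normSq_x₀_y₀_bounds
  exact sqrt_pos.mpr (div_pos (by linarith) (by linarith))

lemma t₀_lt_two : t₀ < 2 := by
  obtain ⟨h₁, -⟩ := normSq_x₀_y₀_bounds
  nlinarith [t₀_sq_mul, t₀_pos]

noncomputable def pair₂ : Set (ℝ × ℝ) := chord (x₀, y₀) (-(t₀ * y₀), t₀ * x₀)

lemma chordSys_pair₂ : ChordSys x₀ y₀ (-(t₀ * y₀)) (t₀ * x₀) := by
  obtain ⟨h₁, h₂⟩ := isCenter_x₀_y₀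
  refine ⟨by linear_combination t₀ * h₁, by linear_combination t₀ * h₂, by ring,
    by linear_combination t₀_sq_mul, fun h ↦ ?_⟩
  have : t₀ * x₀ = 0 := congrArg Prod.snd h
  exact mul_ne_zero t₀_pos.ne' (by linarith [x₀_bounds.2] : x₀ < 0).ne this

lemma ChordSys.eq_or_eq_neg_of_center {u v : ℝ} (h : ChordSys x₀ y₀ u v) :
    (u, v) = (-(t₀ * y₀), t₀ * x₀) ∨ (u, v) = -(-(t₀ * y₀), t₀ * x₀) := by
  obtain ⟨-, -, ho, hn, -⟩ := h
  refine eq_or_eq_neg_of_orthogonal (fun h ↦ ?_) ho (by linear_combination t₀_sq_mul - hn)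
  have : x₀ = 0 := congrArg Prod.fst h
  linarith [x₀_bounds.2]

lemma pair13_eq_chord : pair13 = chord (0, 0) (-1 / √37, 6 / √37) := by
  simp only [pair13, chord, Prod.mk_add_mk, Prod.mk_sub_mk, zero_add, zero_sub, neg_div, neg_neg]

lemma one_div_sqrt_37_sq : (1 / √37) ^ 2 = 1 / 37 := by
  rw [div_pow, sq_sqrt (by norm_num), one_pow]

lemma chordSys_pair13 : ChordSys 0 0 (-1 / √37) (6 / √37) := by
  refine ⟨by ring, by ring, by ring, by linear_combination 37 * one_div_sqrt_37_sq, fun h ↦ ?_⟩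
  have : 6 / √37 = 0 := congrArg Prod.snd h
  exact (by positivity : (6 : ℝ) / √37 ≠ 0) this

lemma ChordSys.eq_or_eq_neg_of_zero {u v : ℝ} (h : ChordSys 0 0 u v) :
    (u, v) = (-1 / √37, 6 / √37) ∨ (u, v) = -(-1 / √37, 6 / √37) := by
  obtain ⟨g₁, -, -, hn, -⟩ := h
  have hv : v = -6 * u := by linear_combination (-1 / 2) * g₁
  have hu : u ^ 2 = (1 / √37) ^ 2 := by
    rw [one_div_sqrt_37_sq]; linear_combination hn / 37 - (v - 6 * u) / 37 * hv
  rcases sq_eq_sq_iff_eq_or_eq_neg.mp hu with rfl | rfl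
  · right; rw [hv]; ext <;> simp only [Prod.fst_neg, Prod.snd_neg] <;> ring
  · left; rw [hv]; ext <;> dsimp only <;> ring

lemma ChordSys.chord_eq {x y u v : ℝ} (h : ChordSys x y u v) :
    chord (x, y) (u, v) = pair13 ∨ chord (x, y) (u, v) = pair₂ := by
  have hy : y ^ 2 ≤ 1 := by
    obtain ⟨-, -, -, hn, -⟩ := h
    linarith [sq_nonneg x, sq_nonneg u, sq_nonneg v]
  rcases h.isCenter.eq_zero_or_eq hy with ⟨rfl, rfl⟩ | ⟨rfl, rfl⟩
  · exact .inl (pair13_eq_chord ▸ chord_eq_of_eq_or_eq_neg h.eq_or_eq_neg_of_zero)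
  · exact .inr (chord_eq_of_eq_or_eq_neg h.eq_or_eq_neg_of_center)

lemma pairSet13_eq : pairSet13 = {pair13, pair₂} := by
  rw [pairSet13_eq_setOf_chordSys]
  ext t
  constructor
  · rintro ⟨x, y, u, v, h, rfl⟩
    exact h.chord_eq
  · rintro (rfl | rfl)
    · exact ⟨0, 0, _, _, chordSys_pair13, pair13_eq_chord⟩
    · exact ⟨x₀, y₀, _, _, chordSys_pair₂, rfl⟩

lemma fst_sq_of_mem_pair13 {P : ℝ × ℝ} (hP : P ∈ pair13) : 37 * P.1 ^ 2 = 1 := by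
  rcases hP with rfl | rfl <;>
    linear_combination 37 * one_div_sqrt_37_sq

lemma fst_lt_of_mem_pair₂ {P : ℝ × ℝ} (hP : P ∈ pair₂) : P.1 < -1 / 6 := by
  have hx := x₀_bounds
  have hy := y₀_bounds
  have hty : -(4 / 13) < t₀ * y₀ ∧ t₀ * y₀ < 0 := by
    constructor <;> nlinarith [t₀_pos, t₀_lt_two]
  rcases hP with rfl | rfl
  · show x₀ + -(t₀ * y₀) < -1 / 6
    linarith
  · show x₀ - -(t₀ * y₀) < -1 / 6
    linarith

lemma disjoint_pair₂_pair13 : Disjoint pair₂ pair13 :=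
  Set.disjoint_left.mpr fun _ h₂ h₁ ↦ by
    nlinarith [fst_lt_of_mem_pair₂ h₂, fst_sq_of_mem_pair13 h₁]

end ClosingSys13

open ClosingSys13

/-- The set of unordered solution pairs of the closing equations has exactly two elements;
one of them is `{(-1/√37, 6/√37), (1/√37, -6/√37)}`, and the other is disjoint from it. -/
theorem closingSys13_two_pairs :
    pairSet13.ncard = 2 ∧ pair13 ∈ pairSet13 ∧
    ∃ t ∈ pairSet13, t ≠ pair13 ∧ Disjoint t pair13 := by
  have hne : pair₂ ≠ pair13 := disjoint_pair₂_pair13.ne (Set.insert_nonempty _ _).ne_empty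
  rw [pairSet13_eq]
  exact ⟨Set.ncard_pair hne.symm, .inl rfl, pair₂, .inr rfl, hne, disjoint_pair₂_pair13⟩
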